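/- For positive definite n×n matrices A and B, d_l(A, A♯B) + d_l(A♯B, (A+B)/2) ≤ d_l(A,B), where A♯B = A♯_{1/2}B is the geometric mean and d_l is the Log-Determinant metric. -/

import Mathlib

/-!
With `S = A^(1/2)` and `C = A^(-1/2) B A^(-1/2)`, the four matrices `A`, `A ♯ B`, `(A + B) / 2`
and `B` are `S f(C) S` for `f = 1, √·, (1 + ·) / 2, id`. The divergence `d_l` is invariant
under congruence, and on functions of one Hermitian matrix it splits as a sum over the
eigenvalues `λ` of `C`. The inequality thus reduces to the scalar inequality for `1` and `λ`,
which after cancelling logarithms is `((1 + √λ) / 2)² ≤ (1 + λ) / 2`.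
-/

open Matrix ComplexOrder

/-- Matrix power via functional calculus (spectral decomposition), for Hermitian matrices. -/
noncomputable def mpow {n : Type*} [Fintype n] [DecidableEq n]
    (A : Matrix n n ℂ) (p : ℝ) : Matrix n n ℂ :=
  if hA : A.IsHermitian then
    (hA.eigenvectorUnitary : Matrix n n ℂ) *
      Matrix.diagonal (fun i => ((hA.eigenvalues i ^ p : ℝ) : ℂ)) *
      star (hA.eigenvectorUnitary : Matrix n n ℂ)
  else 0

/-- Hellinger distance. -/
noncomputable def dh {n : Type*} [Fintype n] [DecidableEq n]
    (A B : Matrix n n ℂ) : ℝ :=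
  Real.sqrt ((Matrix.trace (A + B)).re
    - 2 * (Matrix.trace (mpow A (1/2) * mpow B (1/2))).re)

/-- Bures–Wasserstein distance. -/
noncomputable def db {n : Type*} [Fintype n] [DecidableEq n]
    (A B : Matrix n n ℂ) : ℝ :=
  Real.sqrt ((Matrix.trace (A + B)).re
    - 2 * (Matrix.trace (mpow (mpow A (1/2) * B * mpow A (1/2)) (1/2))).re)

/-- Log-determinant distance. -/
noncomputable def dl {n : Type*} [Fintype n] [DecidableEq n]
    (A B : Matrix n n ℂ) : ℝ :=
  Real.log (((A + B) / 2).det).re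
    - (1/2) * (Real.log (A.det.re) + Real.log (B.det.re))

/-- Matrix power mean μ_p(t;A,B) = (t A^p + (1-t) B^p)^{1/p}. -/
noncomputable def mpm {n : Type*} [Fintype n] [DecidableEq n]
    (p t : ℝ) (A B : Matrix n n ℂ) : Matrix n n ℂ :=
  mpow ((t : ℂ) • mpow A p + ((1 - t : ℝ) : ℂ) • mpow B p) (1/p)

/-- Weighted geometric mean A ♯_t B. -/
noncomputable def sharp {n : Type*} [Fintype n] [DecidableEq n]
    (t : ℝ) (A B : Matrix n n ℂ) : Matrix n n ℂ :=
  mpow A (1/2) * mpow (mpow A (-(1/2)) * B * mpow A (-(1/2))) t * mpow A (1/2)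

/-- Quantum fidelity. -/
noncomputable def fid {n : Type*} [Fintype n] [DecidableEq n]
    (A B : Matrix n n ℂ) : ℝ :=
  ((Matrix.trace (mpow (mpow A (1/2) * B * mpow A (1/2)) (1/2))).re) ^ 2

noncomputable def dlScalar (a b : ℝ) : ℝ :=
  Real.log ((a + b) / 2) - (1/2) * (Real.log a + Real.log b)

lemma dlScalar_one_sqrt_add_le {x : ℝ} (hx : 0 < x) :
    dlScalar 1 √x + dlScalar √x ((1 + x) / 2) ≤ dlScalar 1 x := by
  obtain ⟨s, hs, rfl⟩ : ∃ s : ℝ, 0 < s ∧ x = s ^ 2 :=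
    ⟨√x, Real.sqrt_pos.2 hx, (Real.sq_sqrt hx.le).symm⟩
  have hmid : (s + (1 + s ^ 2) / 2) / 2 = ((1 + s) / 2) ^ 2 := by ring
  have hAMQM : Real.log (((1 + s) / 2) ^ 2) ≤ Real.log ((1 + s ^ 2) / 2) :=
    Real.log_le_log (by positivity) (by nlinarith [sq_nonneg (1 - s)])
  rw [Real.log_pow] at hAMQM
  simp only [dlScalar, Real.sqrt_sq hs.le, hmid, Real.log_pow, Real.log_one]
  push_cast
  linarith

namespace Matrix

variable {n : Type*} [Fintype n] [DecidableEq n]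

lemma div_two_eq_smul (X : Matrix n n ℂ) : X / 2 = (2⁻¹ : ℝ) • X := by
  have h : (2 : Matrix n n ℂ) * ((2⁻¹ : ℝ) • 1) = 1 := by
    rw [mul_smul_comm, mul_one, ← one_add_one_eq_two (R := Matrix n n ℂ), ← two_smul ℝ,
      smul_smul]
    norm_num
  rw [div_eq_mul_inv, inv_eq_right_inv h, mul_smul_comm, mul_one]

lemma mul_add_div_two_mul (M N X Y : Matrix n n ℂ) :
    (M * X * N + M * Y * N) / 2 = M * ((X + Y) / 2) * N := by
  rw [← add_mul, ← mul_add, div_two_eq_smul, div_two_eq_smul, mul_smul_comm, smul_mul_assoc]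

lemma re_det_conj (S X : Matrix n n ℂ) :
    (S * X * Sᴴ).det.re = Complex.normSq S.det * X.det.re := by
  rw [det_mul, det_mul, det_conjTranspose, mul_right_comm, Complex.star_def, Complex.mul_conj,
    Complex.re_ofReal_mul]

lemma dl_conj {S X Y : Matrix n n ℂ} (hS : IsUnit S.det) (hX : X.det.re ≠ 0)
    (hY : Y.det.re ≠ 0) (hXY : ((X + Y) / 2).det.re ≠ 0) :
    dl (S * X * Sᴴ) (S * Y * Sᴴ) = dl X Y := by
  have hc : Complex.normSq S.det ≠ 0 := (Complex.normSq_pos.2 hS.ne_zero).ne'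
  rw [dl, dl, mul_add_div_two_mul, re_det_conj, re_det_conj, re_det_conj, Real.log_mul hc hXY,
    Real.log_mul hc hX, Real.log_mul hc hY]
  ring

lemma mpow_eq_cfc {A : Matrix n n ℂ} (hA : A.IsHermitian) (p : ℝ) :
    mpow A p = cfc (fun x : ℝ => x ^ p) A := by
  rw [mpow, dif_pos hA, hA.cfc_eq]
  rfl

lemma isHermitian_mpow {A : Matrix n n ℂ} (hA : A.IsHermitian) (p : ℝ) :
    (mpow A p).IsHermitian := by
  rw [mpow_eq_cfc hA]
  exact cfc_predicate _ A

lemma PosDef.pos_of_mem_spectrum {A : Matrix n n ℂ} (hA : A.PosDef) {x : ℝ}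
    (hx : x ∈ spectrum ℝ A) : 0 < x := by
  obtain ⟨i, rfl⟩ := hA.isHermitian.spectrum_real_eq_range_eigenvalues ▸ hx
  exact hA.eigenvalues_pos i

lemma mpow_mul_mpow {A : Matrix n n ℂ} (hA : A.PosDef) (p q : ℝ) :
    mpow A p * mpow A q = mpow A (p + q) := by
  simp only [mpow_eq_cfc hA.isHermitian]
  rw [← cfc_mul _ _ A (finite_real_spectrum.continuousOn _) (finite_real_spectrum.continuousOn _)]
  exact cfc_congr fun x hx => (Real.rpow_add (hA.pos_of_mem_spectrum hx) p q).symm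

lemma mpow_zero {A : Matrix n n ℂ} (hA : A.IsHermitian) : mpow A 0 = 1 := by
  simp only [mpow_eq_cfc hA, Real.rpow_zero]
  exact cfc_const_one ℝ A

lemma mpow_one {A : Matrix n n ℂ} (hA : A.IsHermitian) : mpow A 1 = A := by
  simp only [mpow_eq_cfc hA, Real.rpow_one]
  exact cfc_id' ℝ A hA

lemma re_det_cfc {A : Matrix n n ℂ} (hA : A.IsHermitian) (f : ℝ → ℝ) :
    (cfc f A).det.re = ∏ i, f (hA.eigenvalues i) := by
  simp [hA.cfc_eq, IsHermitian.cfc, -Unitary.conjStarAlgAut_apply, ← Complex.ofReal_prod]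

lemma cfc_add_div_two {A : Matrix n n ℂ} (f g : ℝ → ℝ) :
    (cfc f A + cfc g A) / 2 = cfc (fun x => (f x + g x) / 2) A := by
  rw [← cfc_add _ _ _ (finite_real_spectrum.continuousOn _) (finite_real_spectrum.continuousOn _),
    div_two_eq_smul, ← cfc_const_mul _ _ _ (finite_real_spectrum.continuousOn _)]
  exact cfc_congr fun x _ => by ring

lemma dl_cfc {A : Matrix n n ℂ} (hA : A.IsHermitian) {f g : ℝ → ℝ}
    (hf : ∀ i, 0 < f (hA.eigenvalues i)) (hg : ∀ i, 0 < g (hA.eigenvalues i)) :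
    dl (cfc f A) (cfc g A) = ∑ i, dlScalar (f (hA.eigenvalues i)) (g (hA.eigenvalues i)) := by
  rw [dl, cfc_add_div_two, re_det_cfc hA, re_det_cfc hA, re_det_cfc hA,
    Real.log_prod fun i _ => (half_pos (add_pos (hf i) (hg i))).ne',
    Real.log_prod fun i _ => (hf i).ne', Real.log_prod fun i _ => (hg i).ne']
  simp only [dlScalar, Finset.sum_sub_distrib, ← Finset.mul_sum, Finset.sum_add_distrib]

lemma dl_conj_cfc {S A : Matrix n n ℂ} (hS : IsUnit S.det) (hA : A.IsHermitian)
    {f g : ℝ → ℝ} (hf : ∀ i, 0 < f (hA.eigenvalues i))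
    (hg : ∀ i, 0 < g (hA.eigenvalues i)) :
    dl (S * cfc f A * Sᴴ) (S * cfc g A * Sᴴ)
      = ∑ i, dlScalar (f (hA.eigenvalues i)) (g (hA.eigenvalues i)) := by
  have hdet : ∀ h : ℝ → ℝ, (∀ i, 0 < h (hA.eigenvalues i)) → (cfc h A).det.re ≠ 0 :=
    fun h hh => by rw [re_det_cfc hA]; exact (Finset.prod_pos fun i _ => hh i).ne'
  rw [dl_conj hS (hdet f hf) (hdet g hg)
    (by rw [cfc_add_div_two]; exact hdet _ fun i => half_pos (add_pos (hf i) (hg i))),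
    dl_cfc hA hf hg]

end Matrix

theorem stmt15 {n : Type*} [Fintype n] [DecidableEq n]
    {A B : Matrix n n ℂ} (hA : A.PosDef) (hB : B.PosDef) :
    dl A (sharp (1/2) A B) + dl (sharp (1/2) A B) ((A + B) / 2) ≤ dl A B := by
  set S := mpow A (1/2)
  set T := mpow A (-(1/2))
  set C := T * B * T
  have hSH : Sᴴ = S := (isHermitian_mpow hA.isHermitian _).eq
  have hST : S * T = 1 := by rw [mpow_mul_mpow hA]; norm_num [mpow_zero hA.isHermitian]
  have hTS : T * S = 1 := by rw [mpow_mul_mpow hA]; norm_num [mpow_zero hA.isHermitian]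
  have hS : IsUnit S.det := (isUnit_iff_isUnit_det S).mp (IsUnit.of_mul_eq_one T hST)
  have hC : C.PosDef := by
    have hTH : Tᴴ = T := (isHermitian_mpow hA.isHermitian _).eq
    have := hB.conjTranspose_mul_mul_same (mulVec_injective_of_isUnit (IsUnit.of_mul_eq_one S hTS))
    rwa [hTH] at this
  have hA' : A = S * cfc (fun _ : ℝ => (1 : ℝ)) C * Sᴴ := by
    rw [cfc_const_one ℝ C hC.isHermitian.isSelfAdjoint, mul_one, hSH, mpow_mul_mpow hA]
    norm_num [mpow_one hA.isHermitian]
  have hB' : B = S * cfc (fun x : ℝ => x) C * Sᴴ := by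
    rw [cfc_id' ℝ C hC.isHermitian.isSelfAdjoint, hSH]
    simp only [C, ← mul_assoc, hST, one_mul]
    rw [mul_assoc, hTS, mul_one]
  have hG : sharp (1/2) A B = S * cfc (fun x : ℝ => x ^ (1/2 : ℝ)) C * Sᴴ := by
    rw [hSH, ← mpow_eq_cfc hC.isHermitian]
    rfl
  have hM : (A + B) / 2 = S * cfc (fun x : ℝ => (1 + x) / 2) C * Sᴴ := by
    rw [hA', hB', mul_add_div_two_mul, cfc_add_div_two]
  have hev := hC.eigenvalues_pos
  rw [hG, hM, hA', hB', dl_conj_cfc hS hC.isHermitian (fun _ => one_pos)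
      (fun i => Real.rpow_pos_of_pos (hev i) _),
    dl_conj_cfc hS hC.isHermitian (fun i => Real.rpow_pos_of_pos (hev i) _)
      (fun i => half_pos (add_pos one_pos (hev i))),
    dl_conj_cfc hS hC.isHermitian (fun _ => one_pos) hev, ← Finset.sum_add_distrib]
  exact Finset.sum_le_sum fun i _ => by
    simpa only [Real.sqrt_eq_rpow] using dlScalar_one_sqrt_add_le (hev i)
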